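/- For every b ∈ (0, π/2), I₂(b) = ∫_{−1}^{1} (1 − x² sin²b)/(√(1−x²)·√(1 + cos²b − x² sin²b)) dx < π/√2, with equality in the limit b → 0⁺ where I₂(0) = π/√2. -/

import Mathlib

/-!
Write `s = sin b`, `c = cos b` and `t = 1 - x² s²`. The integrand of `I₂(b)` is `φ(t) / √(1 - x²)`
with `φ(t) = t / √(t + c²)`, which is concave on `[0, ∞)` when `c > 0`. Under the arcsine weight
`dx / √(1 - x²)` (total mass `π`) the mean of `t` is `t₀ = 1 - s²/2 = (1 + c²)/2`, so bounding `φ`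
by its tangent line at `t₀` (Jensen) gives `I₂(b) ≤ π φ(t₀)`, and `φ(t₀) < 1/√2` amounts to
`c⁴ < c²`, i.e. `0 < c < 1`.
-/

open Real Set intervalIntegral

/-- `I₂(b) = ∫_{−1}^{1} (1 − x² sin²b)/(√(1−x²) √(1 + cos²b − x² sin²b)) dx`. -/
noncomputable def I₂ (b : ℝ) : ℝ :=
  ∫ x in (-1 : ℝ)..1, (1 - x ^ 2 * Real.sin b ^ 2) /
    (Real.sqrt (1 - x ^ 2) * Real.sqrt (1 + Real.cos b ^ 2 - x ^ 2 * Real.sin b ^ 2))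

open MeasureTheory

theorem intervalIntegral.integral_mono_on_of_nonneg {μ : Measure ℝ} {f g : ℝ → ℝ} {a b : ℝ}
    (hab : a ≤ b) (hf : ∀ x ∈ Icc a b, 0 ≤ f x) (hg : IntervalIntegrable g μ a b)
    (h : ∀ x ∈ Icc a b, f x ≤ g x) : ∫ x in a..b, f x ∂μ ≤ ∫ x in a..b, g x ∂μ := by
  rw [integral_of_le hab, integral_of_le hab]
  refine integral_mono_of_nonneg ?_ hg.1 ?_ <;>
    filter_upwards [ae_restrict_mem measurableSet_Ioc] with x hx
  · exact hf x (Ioc_subset_Icc_self hx)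
  · exact h x (Ioc_subset_Icc_self hx)

theorem intervalIntegrable_one_div_sqrt_one_sub_sq :
    IntervalIntegrable (fun x : ℝ => 1 / √(1 - x ^ 2)) volume (-1) 1 :=
  intervalIntegrable_deriv_of_nonneg continuous_arcsin.continuousOn
    (fun _ hx => by norm_num at hx; exact hasDerivAt_arcsin hx.1.ne' hx.2.ne)
    (fun _ _ => by positivity)

theorem integral_one_div_sqrt_one_sub_sq : ∫ x in (-1 : ℝ)..1, 1 / √(1 - x ^ 2) = π := by
  rw [integral_eq_sub_of_hasDerivAt_of_le (by norm_num) continuous_arcsin.continuousOn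
    (fun _ hx => hasDerivAt_arcsin hx.1.ne' hx.2.ne)
    intervalIntegrable_one_div_sqrt_one_sub_sq, arcsin_one, arcsin_neg_one]
  ring

theorem intervalIntegrable_quadratic_div_sqrt_one_sub_sq (p q : ℝ) :
    IntervalIntegrable (fun x : ℝ => (p + q * x ^ 2) / √(1 - x ^ 2)) volume (-1) 1 := by
  simpa only [mul_one_div] using
    intervalIntegrable_one_div_sqrt_one_sub_sq.continuousOn_mul
      (g := fun x : ℝ => p + q * x ^ 2) (by fun_prop)

theorem integral_quadratic_div_sqrt_one_sub_sq (p q : ℝ) :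
    ∫ x in (-1 : ℝ)..1, (p + q * x ^ 2) / √(1 - x ^ 2) = π * (p + q / 2) := by
  -- `x² = 1 - (1 - x²)`; at `x = ±1` both sides are `0` because `√0 = 0` and `a / 0 = 0`.
  have h : EqOn (fun x : ℝ => (p + q * x ^ 2) / √(1 - x ^ 2))
      (fun x => (p + q) * (1 / √(1 - x ^ 2)) - q * √(1 - x ^ 2)) (uIcc (-1) 1) := by
    intro x hx
    rw [uIcc_of_le (by norm_num)] at hx
    have h0 : 0 ≤ 1 - x ^ 2 := by nlinarith [hx.1, hx.2]
    rcases h0.eq_or_lt with h | h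
    · simp [show x ^ 2 = 1 by linarith]
    · have hs : 0 < √(1 - x ^ 2) := sqrt_pos.2 h
      field_simp
      rw [sq_sqrt h0]
      ring
  have hsqrt : IntervalIntegrable (fun x : ℝ => √(1 - x ^ 2)) volume (-1) 1 :=
    (by fun_prop : Continuous fun x : ℝ => √(1 - x ^ 2)).intervalIntegrable _ _
  rw [integral_congr h, integral_sub (intervalIntegrable_one_div_sqrt_one_sub_sq.const_mul _)
    (hsqrt.const_mul _), intervalIntegral.integral_const_mul,
    intervalIntegral.integral_const_mul, integral_one_div_sqrt_one_sub_sq,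
    integral_sqrt_one_sub_sq]
  ring

/-- The tangent line of the concave map `t ↦ t / √(t + c²)` at `t₀`. In terms of `u = √(t + c²)`
the gap between the two sides is a multiple of `(u - u₀)²`. -/
theorem div_sqrt_add_sq_le_tangent {c t t₀ : ℝ} (hc : 0 < c) (ht : 0 ≤ t) (ht₀ : 0 ≤ t₀) :
    t / √(t + c ^ 2) ≤
      t₀ / √(t₀ + c ^ 2) + (t₀ + 2 * c ^ 2) / (2 * √(t₀ + c ^ 2) ^ 3) * (t - t₀) := by
  set u := √(t + c ^ 2)
  set u₀ := √(t₀ + c ^ 2)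
  have hu : 0 < u := sqrt_pos.2 (by positivity)
  have hu₀ : 0 < u₀ := sqrt_pos.2 (by positivity)
  have ht_eq : t = u ^ 2 - c ^ 2 := by rw [sq_sqrt (by positivity)]; ring
  have ht₀_eq : t₀ = u₀ ^ 2 - c ^ 2 := by rw [sq_sqrt (by positivity)]; ring
  have key : (u₀ ^ 2 - c ^ 2) / u₀
      + (u₀ ^ 2 - c ^ 2 + 2 * c ^ 2) / (2 * u₀ ^ 3) * (u ^ 2 - c ^ 2 - (u₀ ^ 2 - c ^ 2))
      - (u ^ 2 - c ^ 2) / u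
      = (u - u₀) ^ 2 * (u₀ ^ 2 * u + c ^ 2 * u + 2 * c ^ 2 * u₀) / (2 * u₀ ^ 3 * u) := by
    field_simp
    ring
  rw [ht_eq, ht₀_eq, ← sub_nonneg, key]
  positivity

theorem I₂_le_of_cos_pos {b : ℝ} (hc : 0 < cos b) :
    I₂ b ≤ π * ((1 + cos b ^ 2) / 2 / √((1 + cos b ^ 2) / 2 + cos b ^ 2)) := by
  set s := sin b
  set c := cos b
  set t₀ := (1 + c ^ 2) / 2
  set φ₀ := t₀ / √(t₀ + c ^ 2)
  set m := (t₀ + 2 * c ^ 2) / (2 * √(t₀ + c ^ 2) ^ 3)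
  have hsc : s ^ 2 + c ^ 2 = 1 := sin_sq_add_cos_sq b
  have ht₀ : 0 ≤ t₀ := by positivity
  have ht : ∀ x ∈ Icc (-1 : ℝ) 1, 0 ≤ 1 - x ^ 2 * s ^ 2 := fun x hx => by
    nlinarith [mul_nonneg (mul_nonneg (sub_nonneg.2 hx.2) (neg_le_iff_add_nonneg.1 hx.1))
      (sq_nonneg s), sq_nonneg c]
  have hsplit : ∀ x : ℝ, (1 - x ^ 2 * s ^ 2) / (√(1 - x ^ 2) * √(1 + c ^ 2 - x ^ 2 * s ^ 2))
      = (1 - x ^ 2 * s ^ 2) / √((1 - x ^ 2 * s ^ 2) + c ^ 2) / √(1 - x ^ 2) := fun x => by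
    rw [div_mul_eq_div_div_swap, add_sub_right_comm]
  have hbound : ∀ x ∈ Icc (-1 : ℝ) 1,
      (1 - x ^ 2 * s ^ 2) / (√(1 - x ^ 2) * √(1 + c ^ 2 - x ^ 2 * s ^ 2))
        ≤ ((φ₀ + m * (1 - t₀)) + -(m * s ^ 2) * x ^ 2) / √(1 - x ^ 2) := fun x hx => by
    rw [hsplit]
    calc _ ≤ (φ₀ + m * (1 - x ^ 2 * s ^ 2 - t₀)) / √(1 - x ^ 2) :=
          div_le_div_of_nonneg_right (div_sqrt_add_sq_le_tangent hc (ht x hx) ht₀)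
            (sqrt_nonneg _)
      _ = _ := by ring
  calc I₂ b ≤ ∫ x in (-1 : ℝ)..1, ((φ₀ + m * (1 - t₀)) + -(m * s ^ 2) * x ^ 2) / √(1 - x ^ 2) :=
        integral_mono_on_of_nonneg (by norm_num)
          (fun x hx => by rw [hsplit]; have := ht x hx; positivity)
          (intervalIntegrable_quadratic_div_sqrt_one_sub_sq _ _) hbound
    _ = π * φ₀ := by
      rw [integral_quadratic_div_sqrt_one_sub_sq]
      linear_combination -(π * m) / 2 * hsc

theorem div_sqrt_add_sq_lt_inv_sqrt_two {c : ℝ} (hc : 0 < c) (hc1 : c < 1) :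
    (1 + c ^ 2) / 2 / √((1 + c ^ 2) / 2 + c ^ 2) < 1 / √2 := by
  rw [div_lt_div_iff₀ (by positivity) (by positivity), one_mul, lt_sqrt (by positivity),
    mul_pow, sq_sqrt zero_le_two]
  nlinarith [mul_pos (pow_pos hc 2) (show 0 < 1 - c ^ 2 by nlinarith)]

theorem I₂_zero : I₂ 0 = π / √2 := by
  have h : ∀ x : ℝ, (1 - x ^ 2 * sin 0 ^ 2) / (√(1 - x ^ 2) * √(1 + cos 0 ^ 2 - x ^ 2 * sin 0 ^ 2))
      = (√2)⁻¹ * (1 / √(1 - x ^ 2)) := fun x => by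
    norm_num
  simp only [I₂, h, intervalIntegral.integral_const_mul, integral_one_div_sqrt_one_sub_sq]
  ring

/-- For every `b ∈ (0, π/2)`, `I₂(b) < π/√2`, while `I₂(0) = π/√2`. -/
theorem I2_lt_pi_div_sqrt_two :
    (∀ b ∈ Ioo 0 (π / 2), I₂ b < π / Real.sqrt 2) ∧ I₂ 0 = π / Real.sqrt 2 := by
  refine ⟨fun b ⟨hb0, hb⟩ => ?_, I₂_zero⟩
  have hc : 0 < cos b := cos_pos_of_mem_Ioo ⟨by linarith [pi_pos], hb⟩
  have hc1 : cos b < 1 := cos_zero ▸ cos_lt_cos_of_nonneg_of_le_pi le_rfl (by linarith) hb0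
  calc I₂ b ≤ _ := I₂_le_of_cos_pos hc
    _ < π * (1 / √2) := mul_lt_mul_of_pos_left (div_sqrt_add_sq_lt_inv_sqrt_two hc hc1) pi_pos
    _ = π / √2 := mul_one_div _ _
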